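/- arXiv:2604.01913 — 2 statements merged into one kernel-verified Lean document; each statement's English description precedes it below -/
import Mathlib

section
/- Performance-difference identity for estimated Q-functions: Consider a finite-horizon MDP with horizon H, finite state space S and action space A, transition kernels P_h and rewards r_h. Let π' be any policy, let {Q̂_h}_{h=1}^H be arbitrary functions S×A → ℝ, let π be the greedy policy with respect to Q̂ (π_h(s) ∈ argmax_a Q̂_h(s,a)), and set V̂_h(s) = Q̂_h(s, π_h(s)) with V̂_{H+1} ≡ 0. Define the Bellman residual l_h(s,a) = Q̂_h(s,a) − (r_h(s,a) + E_{s'∼P_h(·|s,a)}[max_{a'} Q̂_{h+1}(s',a')]). Then for every initial state x, V̂_1(x) − V_1^{π'}(x) = Σ_{h=1}^H E_{π'}[ Q̂_h(s_h, π_h(s_h)) − E_{a∼π'_h(·|s_h)} Q̂_h(s_h,a) | s_1 = x ] + Σ_{h=1}^H E_{π'}[ l_h(s_h,a_h) | s_1 = x ], where the expectation E_{π'} is over trajectories generated by π' from x. -/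
open Finset

/-- Expected cumulative value `E_π[Σ_{t=h}^{h+n-1} F_t(s_t,a_t) | s_h = s]` for a
stochastic policy `π`, transition kernels `P` and per-step functions `F`,
defined by recursion on the number `n` of remaining steps. -/
noncomputable def cumE {S A : Type*} [Fintype S] [Fintype A]
    (P : ℕ → S → A → S → ℝ) (π : ℕ → S → A → ℝ) (F : ℕ → S → A → ℝ) :
    ℕ → ℕ → S → ℝ
  | 0, _, _ => 0
  | (n + 1), h, s => ∑ a, π h s a * (F h s a + ∑ s', P h s a s' * cumE P π F n (h + 1) s')

theorem pd_aux {S A : Type*} [Fintype S] [Fintype A] [Nonempty A]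
    (P : ℕ → S → A → S → ℝ)
    (r π' Q : ℕ → S → A → ℝ) (hπ'1 : ∀ h s, ∑ a, π' h s a = 1)
    (πg : ℕ → S → A) (hgreedy : ∀ h s a, Q h s a ≤ Q h s (πg h s)) :
    ∀ n h s, (∀ s' a', Q (h + n) s' a' = 0) →
    Q h s (πg h s) - cumE P π' r n h s
      = cumE P π' (fun h s _ => Q h s (πg h s) - ∑ a, π' h s a * Q h s a) n h s
        + cumE P π' (fun h s a =>
            Q h s a - (r h s a + ∑ s', P h s a s' *
              Finset.univ.sup' Finset.univ_nonempty (fun a' => Q (h + 1) s' a'))) n h s := by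
  intro n
  induction n with
  | zero =>
    intro h s h0
    simp only [Nat.add_zero] at h0
    simp [cumE, h0 s (πg h s)]
  | succ n ih =>
    intro h s h0
    have h0' : ∀ s' a', Q (h + 1 + n) s' a' = 0 := by
      intro s' a'; have : h + 1 + n = h + (n + 1) := by ring
      rw [this]; exact h0 s' a'
    have hsup : ∀ s', (Finset.univ.sup' Finset.univ_nonempty fun a' => Q (h+1) s' a')
        = Q (h+1) s' (πg (h+1) s') := fun s' =>
      le_antisymm (Finset.sup'_le _ _ fun a _ => hgreedy _ _ _)
        (Finset.le_sup' _ (Finset.mem_univ _))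
    have ihs : ∀ s', cumE P π' (fun h s _ => Q h s (πg h s) - ∑ a, π' h s a * Q h s a) n (h+1) s'
        + cumE P π' (fun h s a =>
            Q h s a - (r h s a + ∑ s', P h s a s' *
              Finset.univ.sup' Finset.univ_nonempty (fun a' => Q (h + 1) s' a'))) n (h+1) s'
        = Q (h+1) s' (πg (h+1) s') - cumE P π' r n (h+1) s' :=
      fun s' => (ih (h+1) s' h0').symm
    simp only [cumE]
    rw [← Finset.sum_add_distrib]
    have step : ∀ a ∈ Finset.univ (α := A),
        π' h s a * ((Q h s (πg h s) - ∑ a', π' h s a' * Q h s a')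
            + ∑ s', P h s a s' * cumE P π' (fun h s _ => Q h s (πg h s) - ∑ a, π' h s a * Q h s a) n (h+1) s')
        + π' h s a * ((Q h s a - (r h s a + ∑ s', P h s a s' *
              Finset.univ.sup' Finset.univ_nonempty (fun a' => Q (h + 1) s' a')))
            + ∑ s', P h s a s' * cumE P π' (fun h s a =>
            Q h s a - (r h s a + ∑ s', P h s a s' *
              Finset.univ.sup' Finset.univ_nonempty (fun a' => Q (h + 1) s' a'))) n (h+1) s')
        = π' h s a * ((Q h s (πg h s) - ∑ a', π' h s a' * Q h s a')
            + Q h s a - (r h s a + ∑ s', P h s a s' * cumE P π' r n (h+1) s')) := by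
      intro a _
      rw [← mul_add]
      congr 1
      simp only [hsup]
      have : (∑ s', P h s a s' * cumE P π' (fun h s _ => Q h s (πg h s) - ∑ a, π' h s a * Q h s a) n (h+1) s')
          + ∑ s', P h s a s' * cumE P π' (fun h s a =>
            Q h s a - (r h s a + ∑ s', P h s a s' *
              Finset.univ.sup' Finset.univ_nonempty (fun a' => Q (h + 1) s' a'))) n (h+1) s'
          = ∑ s', P h s a s' * (Q (h+1) s' (πg (h+1) s') - cumE P π' r n (h+1) s') := by
        rw [← Finset.sum_add_distrib]
        refine Finset.sum_congr rfl fun s' _ => ?_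
        rw [← mul_add, ihs s']
      simp only [mul_sub, Finset.sum_sub_distrib] at this ⊢
      linarith [this]
    rw [Finset.sum_congr rfl step]
    simp only [mul_add, mul_sub, Finset.sum_add_distrib, Finset.sum_sub_distrib,
      ← Finset.sum_mul, hπ'1, one_mul]
    ring

/-- performance-difference identity for estimated Q-functions:
with `π` the greedy policy w.r.t. `Q̂` and `V̂_h(s) = Q̂_h(s, π_h(s))`,
`V̂_1(x) − V_1^{π'}(x)` equals the sum of the greedy-comparison terms plus the sum
of the expected Bellman residuals along trajectories of `π'`. -/
theorem performance_difference_identity {S A : Type*} [Fintype S] [Fintype A] [Nonempty A]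
    (H : ℕ) (hH : 1 ≤ H)
    (P : ℕ → S → A → S → ℝ) (hP0 : ∀ h s a s', 0 ≤ P h s a s')
    (hP1 : ∀ h s a, ∑ s', P h s a s' = 1)
    (r : ℕ → S → A → ℝ) (hr0 : ∀ h s a, 0 ≤ r h s a) (hr1 : ∀ h s a, r h s a ≤ 1)
    (π' : ℕ → S → A → ℝ) (hπ'0 : ∀ h s a, 0 ≤ π' h s a) (hπ'1 : ∀ h s, ∑ a, π' h s a = 1)
    (Q : ℕ → S → A → ℝ) (hQend : ∀ s a, Q (H + 1) s a = 0)
    (πg : ℕ → S → A) (hgreedy : ∀ h s a, Q h s a ≤ Q h s (πg h s))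
    (x : S) :
    Q 1 x (πg 1 x) - cumE P π' r H 1 x
      = cumE P π' (fun h s _ => Q h s (πg h s) - ∑ a, π' h s a * Q h s a) H 1 x
        + cumE P π' (fun h s a =>
            Q h s a - (r h s a + ∑ s', P h s a s' *
              Finset.univ.sup' Finset.univ_nonempty (fun a' => Q (h + 1) s' a'))) H 1 x := by
  exact pd_aux P r π' Q hπ'1 πg hgreedy H 1 x (by
    intro s' a'
    rw [show 1 + H = H + 1 from Nat.add_comm 1 H]
    exact hQend s' a')
end

section
/- Soft suboptimality bound: In a finite-horizon entropy-regularized MDP with horizon H and temperature α > 0, let {Q̂_h}_{h=1}^H be arbitrary functions with Q̂_{H+1} ≡ 0, and let π_{Q̂} be the induced Boltzmann policy. Defining Δ_h(f,g)(s,a) = (f(s,a) − (T_h^soft g)(s,a))², we have for every start state x: V_1^{soft,π*}(x) − V_1^{soft,π_{Q̂}}(x) ≤ √H · ( √( E_{π*}[ Σ_{h=1}^H Δ_h(Q̂_h, Q̂_{h+1})(s_h,a_h) | s_1=x ] ) + √( E_{π_{Q̂}}[ Σ_{h=1}^H Δ_h(Q̂_h, Q̂_{h+1})(s_h,a_h)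 | s_1=x ] ) ), where π* is the soft-optimal policy. -/
open Finset

/-- Optimal soft (entropy-regularized) value function by backward recursion, via
the log-sum-exp (soft Bellman optimality) operator; the first argument is the
number of remaining steps. -/
noncomputable def Vsoft {S A : Type*} [Fintype S] [Fintype A]
    (P : ℕ → S → A → S → ℝ) (r : ℕ → S → A → ℝ) (α : ℝ) :
    ℕ → ℕ → S → ℝ
  | 0, _, _ => 0
  | (n + 1), h, s =>
      α * Real.log (∑ a,
        Real.exp ((r h s a + ∑ s', P h s a s' * Vsoft P r α n (h + 1) s') / α))


noncomputable def softV {S A : Type*} [Fintype A] (Q : ℕ → S → A → ℝ) (α : ℝ) : ℕ → S → ℝ :=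
  fun h s => α * Real.log (∑ a, Real.exp (Q h s a / α))

noncomputable def resid {S A : Type*} [Fintype S] [Fintype A]
    (P : ℕ → S → A → S → ℝ) (r Q : ℕ → S → A → ℝ) (α : ℝ) : ℕ → S → A → ℝ :=
  fun h s a => Q h s a - (r h s a + ∑ s', P h s a s' * softV Q α (h + 1) s')


/-- Jensen / Cauchy-Schwarz for a finite probability vector. -/
lemma jensen_sq {A : Type*} [Fintype A] (w x : A → ℝ) (hw0 : ∀ a, 0 ≤ w a)
    (hw1 : ∑ a, w a = 1) : (∑ a, w a * x a) ^ 2 ≤ ∑ a, w a * x a ^ 2 := by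
  have h := Finset.sum_mul_sq_le_sq_mul_sq Finset.univ (fun a => Real.sqrt (w a))
      (fun a => Real.sqrt (w a) * x a)
  have e1 : ∀ a : A, Real.sqrt (w a) * (Real.sqrt (w a) * x a) = w a * x a := fun a => by
    rw [← mul_assoc, Real.mul_self_sqrt (hw0 a)]
  have e2 : ∀ a : A, Real.sqrt (w a) ^ 2 = w a := fun a => Real.sq_sqrt (hw0 a)
  have e3 : ∀ a : A, (Real.sqrt (w a) * x a) ^ 2 = w a * x a ^ 2 := fun a => by
    rw [mul_pow, e2]
  calc (∑ a, w a * x a) ^ 2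
      = (∑ a, Real.sqrt (w a) * (Real.sqrt (w a) * x a)) ^ 2 := by simp_rw [e1]
    _ ≤ (∑ a, Real.sqrt (w a) ^ 2) * ∑ a, (Real.sqrt (w a) * x a) ^ 2 := h
    _ = ∑ a, w a * x a ^ 2 := by simp_rw [e2, e3, hw1, one_mul]

lemma cumE_nonneg {S A : Type*} [Fintype S] [Fintype A]
    (P : ℕ → S → A → S → ℝ) (π F : ℕ → S → A → ℝ)
    (hP0 : ∀ h s a s', 0 ≤ P h s a s') (hπ0 : ∀ h s a, 0 ≤ π h s a)
    (hF : ∀ h s a, 0 ≤ F h s a) : ∀ n h s, 0 ≤ cumE P π F n h s := by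
  intro n
  induction n with
  | zero => intro h s; simp [cumE]
  | succ n ih =>
    intro h s
    simp only [cumE]
    refine Finset.sum_nonneg fun a _ => mul_nonneg (hπ0 _ _ _) (add_nonneg (hF _ _ _) ?_)
    exact Finset.sum_nonneg fun s' _ => mul_nonneg (hP0 _ _ _ _) (ih _ _)

lemma key_sq (a b c : ℝ) (n : ℕ) (hc : 0 ≤ c) (hb : b ^ 2 ≤ n * c) :
    (a + b) ^ 2 ≤ (n + 1) * (a ^ 2 + c) := by
  rcases Nat.eq_zero_or_pos n with h | h
  · subst h
    simp only [Nat.cast_zero, zero_mul] at hb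
    have hb0 : b = 0 := by nlinarith [sq_nonneg b]
    subst hb0; nlinarith
  · have hn : (1 : ℝ) ≤ (n : ℝ) := by exact_mod_cast h
    have hnpos : (0 : ℝ) < (n : ℝ) := by linarith
    have key : (n : ℝ) * (a + b) ^ 2 ≤ (n : ℝ) * (((n : ℝ) + 1) * (a ^ 2 + c)) := by
      nlinarith [sq_nonneg ((n : ℝ) * a - b), mul_le_mul_of_nonneg_left hb (by linarith : (0:ℝ) ≤ (n:ℝ) + 1)]
    exact le_of_mul_le_mul_left key hnpos

lemma cumE_sq_le {S A : Type*} [Fintype S] [Fintype A]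
    (P : ℕ → S → A → S → ℝ) (π F : ℕ → S → A → ℝ)
    (hP0 : ∀ h s a s', 0 ≤ P h s a s') (hP1 : ∀ h s a, ∑ s', P h s a s' = 1)
    (hπ0 : ∀ h s a, 0 ≤ π h s a) (hπ1 : ∀ h s, ∑ a, π h s a = 1) :
    ∀ n h s, (cumE P π F n h s) ^ 2
      ≤ (n : ℝ) * cumE P π (fun h s a => F h s a ^ 2) n h s := by
  intro n
  induction n with
  | zero => intro h s; simp [cumE]
  | succ n ih =>
    intro h s
    have hGnn : ∀ h' s', 0 ≤ cumE P π (fun h s a => F h s a ^ 2) n h' s' :=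
      cumE_nonneg P π _ hP0 hπ0 (fun _ _ _ => sq_nonneg _) n
    have step1 : (cumE P π F (n+1) h s) ^ 2
        ≤ ∑ a, π h s a * (F h s a + ∑ s', P h s a s' * cumE P π F n (h+1) s') ^ 2 := by
      simp only [cumE]
      exact jensen_sq _ _ (hπ0 h s) (hπ1 h s)
    have step2 : ∀ a, (F h s a + ∑ s', P h s a s' * cumE P π F n (h+1) s') ^ 2
        ≤ ∑ s', P h s a s' * (F h s a + cumE P π F n (h+1) s') ^ 2 := by
      intro a
      have e : F h s a + ∑ s', P h s a s' * cumE P π F n (h+1) s'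
          = ∑ s', P h s a s' * (F h s a + cumE P π F n (h+1) s') := by
        simp only [mul_add, Finset.sum_add_distrib, ← Finset.sum_mul, hP1, one_mul]
      rw [e]
      exact jensen_sq _ _ (hP0 h s a) (hP1 h s a)
    have step3 : ∀ a s', (F h s a + cumE P π F n (h+1) s') ^ 2
        ≤ ((n : ℝ) + 1) * (F h s a ^ 2 + cumE P π (fun h s a => F h s a ^ 2) n (h+1) s') :=
      fun a s' => key_sq _ _ _ n (hGnn _ _) (ih (h+1) s')
    have step4 : ∀ a, ∑ s', P h s a s' * (F h s a + cumE P π F n (h+1) s') ^ 2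
        ≤ ((n : ℝ) + 1) * (F h s a ^ 2
            + ∑ s', P h s a s' * cumE P π (fun h s a => F h s a ^ 2) n (h+1) s') := by
      intro a
      calc ∑ s', P h s a s' * (F h s a + cumE P π F n (h+1) s') ^ 2
          ≤ ∑ s', P h s a s' * (((n : ℝ) + 1)
              * (F h s a ^ 2 + cumE P π (fun h s a => F h s a ^ 2) n (h+1) s')) :=
            Finset.sum_le_sum fun s' _ =>
              mul_le_mul_of_nonneg_left (step3 a s') (hP0 h s a s')
        _ = ((n : ℝ) + 1) * (F h s a ^ 2
              + ∑ s', P h s a s' * cumE P π (fun h s a => F h s a ^ 2) n (h+1) s') := by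
            calc ∑ s', P h s a s' * (((n : ℝ) + 1)
                  * (F h s a ^ 2 + cumE P π (fun h s a => F h s a ^ 2) n (h+1) s'))
                = ∑ s', (((n : ℝ) + 1) * (P h s a s' * F h s a ^ 2)
                    + ((n : ℝ) + 1) * (P h s a s'
                        * cumE P π (fun h s a => F h s a ^ 2) n (h+1) s')) :=
                  Finset.sum_congr rfl fun s' _ => by ring
              _ = ((n : ℝ) + 1) * ((∑ s', P h s a s' * F h s a ^ 2)
                    + ∑ s', P h s a s' * cumE P π (fun h s a => F h s a ^ 2) n (h+1) s') := by
                  rw [Finset.sum_add_distrib, ← Finset.mul_sum, ← Finset.mul_sum, ← mul_add]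
              _ = ((n : ℝ) + 1) * (F h s a ^ 2
                    + ∑ s', P h s a s' * cumE P π (fun h s a => F h s a ^ 2) n (h+1) s') := by
                  rw [← Finset.sum_mul, hP1, one_mul]
    calc (cumE P π F (n+1) h s) ^ 2
        ≤ ∑ a, π h s a * (F h s a + ∑ s', P h s a s' * cumE P π F n (h+1) s') ^ 2 := step1
      _ ≤ ∑ a, π h s a * (∑ s', P h s a s' * (F h s a + cumE P π F n (h+1) s') ^ 2) :=
          Finset.sum_le_sum fun a _ => mul_le_mul_of_nonneg_left (step2 a) (hπ0 h s a)
      _ ≤ ∑ a, π h s a * (((n : ℝ) + 1) * (F h s a ^ 2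
            + ∑ s', P h s a s' * cumE P π (fun h s a => F h s a ^ 2) n (h+1) s')) :=
          Finset.sum_le_sum fun a _ => mul_le_mul_of_nonneg_left (step4 a) (hπ0 h s a)
      _ = ((n : ℝ) + 1) * cumE P π (fun h s a => F h s a ^ 2) (n+1) h s := by
          simp only [cumE, Finset.mul_sum]
          exact Finset.sum_congr rfl fun a _ => by ring
      _ = ((n + 1 : ℕ) : ℝ) * cumE P π (fun h s a => F h s a ^ 2) (n+1) h s := by
          push_cast; ring


/-- Gibbs variational inequality. -/
lemma gibbs_ineq {A : Type*} [Fintype A] [Nonempty A] (α : ℝ) (hα : 0 < α)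
    (w q : A → ℝ) (hw0 : ∀ a, 0 ≤ w a) (hw1 : ∑ a, w a = 1) :
    ∑ a, w a * (q a - α * Real.log (w a)) ≤ α * Real.log (∑ a, Real.exp (q a / α)) := by
  set Z := ∑ a, Real.exp (q a / α) with hZ
  have hZpos : 0 < Z := Finset.sum_pos (fun a _ => Real.exp_pos _) Finset.univ_nonempty
  have hterm : ∀ a, w a * (q a - α * Real.log (w a))
      ≤ w a * (α * Real.log Z) + α * (Real.exp (q a / α) / Z - w a) := by
    intro a
    rcases eq_or_lt_of_le (hw0 a) with h0 | hpos
    · rw [← h0]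
      simp only [zero_mul, mul_zero, sub_zero, zero_add]
      positivity
    · have hwne : w a ≠ 0 := ne_of_gt hpos
      have ht : 0 < Real.exp (q a / α) / (w a * Z) := by positivity
      have hlog := Real.log_le_sub_one_of_pos ht
      have hlogeq : Real.log (Real.exp (q a / α) / (w a * Z))
          = q a / α - Real.log (w a) - Real.log Z := by
        rw [Real.log_div (Real.exp_ne_zero _) (by positivity),
          Real.log_exp, Real.log_mul hwne (ne_of_gt hZpos)]
        ring
      rw [hlogeq] at hlog
      have hmul := mul_le_mul_of_nonneg_left hlog (le_of_lt hpos)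
      have he : w a * (Real.exp (q a / α) / (w a * Z) - 1)
          = Real.exp (q a / α) / Z - w a := by
        field_simp
      rw [he] at hmul
      -- hmul : w a * (q a / α - Real.log (w a) - Real.log Z) ≤ exp/Z - w a
      have := mul_le_mul_of_nonneg_left hmul (le_of_lt hα)
      have hαne : α ≠ 0 := ne_of_gt hα
      calc w a * (q a - α * Real.log (w a))
          = α * (w a * (q a / α - Real.log (w a) - Real.log Z)) + w a * (α * Real.log Z) := by
            field_simp; ring
        _ ≤ α * (Real.exp (q a / α) / Z - w a) + w a * (α * Real.log Z) := by linarith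
        _ = w a * (α * Real.log Z) + α * (Real.exp (q a / α) / Z - w a) := by ring
  calc ∑ a, w a * (q a - α * Real.log (w a))
      ≤ ∑ a, (w a * (α * Real.log Z) + α * (Real.exp (q a / α) / Z - w a)) :=
        Finset.sum_le_sum fun a _ => hterm a
    _ = (∑ a, w a) * (α * Real.log Z) + α * ((∑ a, Real.exp (q a / α)) / Z - ∑ a, w a) := by
        rw [Finset.sum_add_distrib, ← Finset.sum_mul, ← Finset.mul_sum,
          Finset.sum_sub_distrib, ← Finset.sum_div]
    _ = α * Real.log Z := by
        rw [hw1, ← hZ, div_self (ne_of_gt hZpos)]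
        ring

/-- Soft performance-difference identity (exact, for the Boltzmann-consistent policy). -/
lemma lemA {S A : Type*} [Fintype S] [Fintype A]
    (P : ℕ → S → A → S → ℝ) (π g d : ℕ → S → A → ℝ) (V : ℕ → S → ℝ) (K : ℝ) (N : ℕ)
    (hP1 : ∀ h s a, ∑ s', P h s a s' = 1)
    (hπ1 : ∀ h s, ∑ a, π h s a = 1)
    (hVend : ∀ s : S, V (N + 1) s = K)
    (hg : ∀ h s a, g h s a = V h s - d h s a - ∑ s', P h s a s' * V (h + 1) s') :
    ∀ n h, h + n = N + 1 → ∀ s,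
      V h s - cumE P π g n h s = cumE P π d n h s + K := by
  intro n
  induction n with
  | zero =>
    intro h hh s
    have : h = N + 1 := by omega
    subst this
    simp [cumE, hVend]
  | succ n ih =>
    intro h hh s
    have hh' : (h + 1) + n = N + 1 := by omega
    have hsum : ∀ a, g h s a + ∑ s', P h s a s' * cumE P π g n (h+1) s'
        = (V h s - K) - (d h s a + ∑ s', P h s a s' * cumE P π d n (h+1) s') := by
      intro a
      have e : ∑ s', P h s a s' * cumE P π g n (h+1) s'
          = ∑ s', (P h s a s' * V (h+1) s'
              - P h s a s' * cumE P π d n (h+1) s' - P h s a s' * K) := by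
        refine Finset.sum_congr rfl fun s' _ => ?_
        have := ih (h+1) hh' s'
        have : cumE P π g n (h+1) s' = V (h+1) s' - cumE P π d n (h+1) s' - K := by linarith
        rw [this]; ring
      rw [e, Finset.sum_sub_distrib, Finset.sum_sub_distrib, ← Finset.sum_mul, hP1, one_mul,
        hg h s a]
      ring
    have e2 : cumE P π g (n+1) h s
        = (V h s - K) - ∑ a, π h s a * (d h s a + ∑ s', P h s a s' * cumE P π d n (h+1) s') := by
      show (∑ a, π h s a * (g h s a + ∑ s', P h s a s' * cumE P π g n (h + 1) s')) = _
      rw [Finset.sum_congr rfl fun a _ => by rw [hsum a]]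
      rw [show (fun a => π h s a * ((V h s - K)
            - (d h s a + ∑ s', P h s a s' * cumE P π d n (h+1) s')))
          = fun a => π h s a * (V h s - K)
            - π h s a * (d h s a + ∑ s', P h s a s' * cumE P π d n (h+1) s') from
        funext fun a => by ring]
      rw [Finset.sum_sub_distrib, ← Finset.sum_mul, hπ1, one_mul]
    have e3 : cumE P π d (n+1) h s
        = ∑ a, π h s a * (d h s a + ∑ s', P h s a s' * cumE P π d n (h+1) s') := rfl
    rw [e2, e3]; ring

/-- Soft performance-difference inequality for any stochastic policy. -/
lemma lemB {S A : Type*} [Fintype S] [Fintype A]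
    (P : ℕ → S → A → S → ℝ) (π g d : ℕ → S → A → ℝ) (V : ℕ → S → ℝ) (K : ℝ) (N : ℕ)
    (hP0 : ∀ h s a s', 0 ≤ P h s a s')
    (hP1 : ∀ h s a, ∑ s', P h s a s' = 1)
    (hπ0 : ∀ h s a, 0 ≤ π h s a)
    (hπ1 : ∀ h s, ∑ a, π h s a = 1)
    (hVend : ∀ s : S, V (N + 1) s = K)
    (hG : ∀ h s, ∑ a, π h s a * (g h s a + d h s a + ∑ s', P h s a s' * V (h + 1) s')
        ≤ V h s) :
    ∀ n h, h + n = N + 1 → ∀ s,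
      cumE P π g n h s - V h s ≤ -(cumE P π d n h s) - K := by
  intro n
  induction n with
  | zero =>
    intro h hh s
    have : h = N + 1 := by omega
    subst this
    simp [cumE, hVend]
  | succ n ih =>
    intro h hh s
    have hh' : (h + 1) + n = N + 1 := by omega
    have hkey : ∀ a, g h s a + ∑ s', P h s a s' * cumE P π g n (h+1) s'
        ≤ (g h s a + d h s a + ∑ s', P h s a s' * V (h+1) s')
          - (d h s a + ∑ s', P h s a s' * cumE P π d n (h+1) s') - K := by
      intro a
      have h1 : ∑ s', P h s a s' * cumE P π g n (h+1) s'
          ≤ ∑ s', P h s a s' * (V (h+1) s' - cumE P π d n (h+1) s' - K) := by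
        refine Finset.sum_le_sum fun s' _ => mul_le_mul_of_nonneg_left ?_ (hP0 h s a s')
        have := ih (h+1) hh' s'
        linarith
      have h2 : ∑ s', P h s a s' * (V (h+1) s' - cumE P π d n (h+1) s' - K)
          = (∑ s', P h s a s' * V (h+1) s')
            - (∑ s', P h s a s' * cumE P π d n (h+1) s') - K := by
        rw [show (fun s' => P h s a s' * (V (h+1) s' - cumE P π d n (h+1) s' - K))
            = fun s' => P h s a s' * V (h+1) s'
              - P h s a s' * cumE P π d n (h+1) s' - P h s a s' * K from
          funext fun s' => by ring]
        rw [Finset.sum_sub_distrib, Finset.sum_sub_distrib, ← Finset.sum_mul, hP1, one_mul]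
      rw [h2] at h1
      linarith
    have e1 : cumE P π g (n+1) h s
        = ∑ a, π h s a * (g h s a + ∑ s', P h s a s' * cumE P π g n (h+1) s') := rfl
    have e3 : cumE P π d (n+1) h s
        = ∑ a, π h s a * (d h s a + ∑ s', P h s a s' * cumE P π d n (h+1) s') := rfl
    have step : cumE P π g (n+1) h s
        ≤ ∑ a, π h s a * ((g h s a + d h s a + ∑ s', P h s a s' * V (h+1) s')
            - (d h s a + ∑ s', P h s a s' * cumE P π d n (h+1) s') - K) := by
      rw [e1]
      exact Finset.sum_le_sum fun a _ => mul_le_mul_of_nonneg_left (hkey a) (hπ0 h s a)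
    have expand : ∑ a, π h s a * ((g h s a + d h s a + ∑ s', P h s a s' * V (h+1) s')
            - (d h s a + ∑ s', P h s a s' * cumE P π d n (h+1) s') - K)
        = (∑ a, π h s a * (g h s a + d h s a + ∑ s', P h s a s' * V (h+1) s'))
          - (∑ a, π h s a * (d h s a + ∑ s', P h s a s' * cumE P π d n (h+1) s')) - K := by
      simp only [mul_sub]
      rw [Finset.sum_sub_distrib, Finset.sum_sub_distrib, ← Finset.sum_mul, hπ1, one_mul]
    rw [expand] at step
    have := hG h s
    rw [e3]
    linarith

/-- soft suboptimality bound: with `π_{Q̂}` the Boltzmann policy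
induced by `Q̂` (and `Q̂_{H+1} ≡ 0`) and `π*` the soft-optimal policy,
`V_1^{soft,π*}(x) − V_1^{soft,π_{Q̂}}(x)
  ≤ √H (√E_{π*}[Σ_h Δ_h] + √E_{π_{Q̂}}[Σ_h Δ_h])`. -/
theorem soft_suboptimality_bound
    {S A : Type*} [Fintype S] [Fintype A] [Nonempty A]
    (H : ℕ) (hH : 1 ≤ H) (α : ℝ) (hα : 0 < α)
    (P : ℕ → S → A → S → ℝ) (hP0 : ∀ h s a s', 0 ≤ P h s a s')
    (hP1 : ∀ h s a, ∑ s', P h s a s' = 1)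
    (r : ℕ → S → A → ℝ) (hr0 : ∀ h s a, 0 ≤ r h s a) (hr1 : ∀ h s a, r h s a ≤ 1)
    (Q : ℕ → S → A → ℝ) (hQend : ∀ s a, Q (H + 1) s a = 0)
    -- the Boltzmann policy induced by Q̂
    (πQ : ℕ → S → A → ℝ)
    (hπQ : ∀ h s a, πQ h s a = Real.exp (Q h s a / α) / ∑ b, Real.exp (Q h s b / α))
    -- π* is a soft-optimal policy: a stochastic policy whose entropy-augmented
    -- value equals the optimal soft value
    (πstar : ℕ → S → A → ℝ) (hπstar0 : ∀ h s a, 0 ≤ πstar h s a)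
    (hπstar1 : ∀ h s, ∑ a, πstar h s a = 1)
    (hopt : ∀ y, cumE P πstar (fun h s a => r h s a - α * Real.log (πstar h s a)) H 1 y
      = Vsoft P r α H 1 y)
    -- the squared soft Bellman residual Δ_h(Q̂_h, Q̂_{h+1})(s,a)
    (Δ : ℕ → S → A → ℝ)
    (hΔ : ∀ h s a, Δ h s a =
      (Q h s a - (r h s a + ∑ s', P h s a s' *
        (α * Real.log (∑ a', Real.exp (Q (h + 1) s' a' / α))))) ^ 2)
    (x : S) :
    Vsoft P r α H 1 x
        - cumE P πQ (fun h s a => r h s a - α * Real.log (πQ h s a)) H 1 x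
      ≤ Real.sqrt H *
        (Real.sqrt (cumE P πstar Δ H 1 x) + Real.sqrt (cumE P πQ Δ H 1 x)) := by
  have hZpos : ∀ h (s : S), 0 < ∑ b, Real.exp (Q h s b / α) :=
    fun h s => Finset.sum_pos (fun b _ => Real.exp_pos _) Finset.univ_nonempty
  have hπQ0 : ∀ h s a, 0 ≤ πQ h s a := by
    intro h s a; rw [hπQ]; positivity
  have hπQ1 : ∀ h s, ∑ a, πQ h s a = 1 := by
    intro h s
    rw [Finset.sum_congr rfl fun a _ => hπQ h s a, ← Finset.sum_div,
      div_self (ne_of_gt (hZpos h s))]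
  have hlog : ∀ h s a, α * Real.log (πQ h s a) = Q h s a - softV Q α h s := by
    intro h s a
    rw [hπQ, Real.log_div (Real.exp_ne_zero _) (ne_of_gt (hZpos h s)), Real.log_exp, softV]
    field_simp
  have hVend : ∀ s : S, softV Q α (H + 1) s = α * Real.log (Fintype.card A : ℝ) := by
    intro s
    simp only [softV, hQend, zero_div, Real.exp_zero, Finset.sum_const, Finset.card_univ,
      nsmul_eq_mul, mul_one]
  have hAx := lemA P πQ (fun h s a => r h s a - α * Real.log (πQ h s a)) (resid P r Q α)
      (softV Q α) (α * Real.log (Fintype.card A : ℝ)) H hP1 hπQ1 hVend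
      (fun h s a => by simp only [resid]; rw [hlog h s a]; ring)
      H 1 (by omega) x
  have hBx := lemB P πstar (fun h s a => r h s a - α * Real.log (πstar h s a)) (resid P r Q α)
      (softV Q α) (α * Real.log (Fintype.card A : ℝ)) H hP0 hP1 hπstar0 hπstar1 hVend
      (fun h s => by
        rw [Finset.sum_congr rfl fun a _ =>
          show πstar h s a * ((r h s a - α * Real.log (πstar h s a)) + resid P r Q α h s a
                + ∑ s', P h s a s' * softV Q α (h + 1) s')
              = πstar h s a * (Q h s a - α * Real.log (πstar h s a)) from by
            simp only [resid]; ring]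
        exact gibbs_ineq α hα _ _ (hπstar0 h s) (hπstar1 h s))
      H 1 (by omega) x
  have hmain : Vsoft P r α H 1 x
      - cumE P πQ (fun h s a => r h s a - α * Real.log (πQ h s a)) H 1 x
      ≤ cumE P πQ (resid P r Q α) H 1 x - cumE P πstar (resid P r Q α) H 1 x := by
    have hox := hopt x
    linarith
  have hΔd : (fun h s a => resid P r Q α h s a ^ 2) = Δ := by
    funext h s a
    rw [hΔ h s a]
    simp only [resid, softV]
  have hΔ0 : ∀ h s a, 0 ≤ Δ h s a := fun h s a => by rw [hΔ]; positivity
  have c1 : 0 ≤ cumE P πQ Δ H 1 x := cumE_nonneg P πQ Δ hP0 hπQ0 hΔ0 H 1 x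
  have c2 : 0 ≤ cumE P πstar Δ H 1 x := cumE_nonneg P πstar Δ hP0 hπstar0 hΔ0 H 1 x
  have s1 : (cumE P πQ (resid P r Q α) H 1 x) ^ 2 ≤ (H : ℝ) * cumE P πQ Δ H 1 x := by
    have h := cumE_sq_le P πQ (resid P r Q α) hP0 hP1 hπQ0 hπQ1 H 1 x
    rwa [hΔd] at h
  have s2 : (cumE P πstar (resid P r Q α) H 1 x) ^ 2 ≤ (H : ℝ) * cumE P πstar Δ H 1 x := by
    have h := cumE_sq_le P πstar (resid P r Q α) hP0 hP1 hπstar0 hπstar1 H 1 x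
    rwa [hΔd] at h
  have b1 : cumE P πQ (resid P r Q α) H 1 x
      ≤ Real.sqrt H * Real.sqrt (cumE P πQ Δ H 1 x) := by
    calc cumE P πQ (resid P r Q α) H 1 x ≤ |cumE P πQ (resid P r Q α) H 1 x| := le_abs_self _
      _ = Real.sqrt ((cumE P πQ (resid P r Q α) H 1 x) ^ 2) := (Real.sqrt_sq_eq_abs _).symm
      _ ≤ Real.sqrt ((H : ℝ) * cumE P πQ Δ H 1 x) := Real.sqrt_le_sqrt s1
      _ = Real.sqrt H * Real.sqrt (cumE P πQ Δ H 1 x) := Real.sqrt_mul (by positivity) _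
  have b2 : -(cumE P πstar (resid P r Q α) H 1 x)
      ≤ Real.sqrt H * Real.sqrt (cumE P πstar Δ H 1 x) := by
    calc -(cumE P πstar (resid P r Q α) H 1 x)
        ≤ |cumE P πstar (resid P r Q α) H 1 x| := neg_le_abs _
      _ = Real.sqrt ((cumE P πstar (resid P r Q α) H 1 x) ^ 2) := (Real.sqrt_sq_eq_abs _).symm
      _ ≤ Real.sqrt ((H : ℝ) * cumE P πstar Δ H 1 x) := Real.sqrt_le_sqrt s2
      _ = Real.sqrt H * Real.sqrt (cumE P πstar Δ H 1 x) := Real.sqrt_mul (by positivity) _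
  have hdist : Real.sqrt H * (Real.sqrt (cumE P πstar Δ H 1 x)
        + Real.sqrt (cumE P πQ Δ H 1 x))
      = Real.sqrt H * Real.sqrt (cumE P πstar Δ H 1 x)
        + Real.sqrt H * Real.sqrt (cumE P πQ Δ H 1 x) := by ring
  linarith
end
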